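/- Let (λ_i) be nondecreasing positive reals and suppose ∑_{p=1}^∞ λ_{i_{p,j}}/2^p < ∞ for all j ∈ {1,...,d} (where i_{p,j} = 2^{p-1}(d+j-1)+1+∑_{q=0}^{p-1} c_q 2^{p-q-1} ranges over indices determined by dyadic digits). Then for every s ∈ [0,1] and j ∈ {1,...,d}, the series ∑_{i=1}^∞ λ_i ⟨S_i(s), e_j⟩² converges and is bounded by λ_j s² + (1/2)∑_{p=1}^∞ λ_{i_{p,j}}/2^p, uniformly in s. -/

import Mathlib

open MeasureTheory

noncomputable def haarFn (n : ℕ) (t : ℝ) : ℝ :=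
  if n ≤ 1 then 1
  else
    let m : ℕ := Nat.log 2 (n - 1)
    let k : ℕ := n - 2 ^ m
    if ((k : ℝ) - 1) / 2 ^ m ≤ t ∧ t < (2 * (k : ℝ) - 1) / 2 ^ (m + 1) then
      (2 : ℝ) ^ ((m : ℝ) / 2)
    else if (2 * (k : ℝ) - 1) / 2 ^ (m + 1) ≤ t ∧ t < (k : ℝ) / 2 ^ m then
      -(2 : ℝ) ^ ((m : ℝ) / 2)
    else 0

noncomputable def schauderFn (n : ℕ) (s : ℝ) : ℝ :=
  ∫ u in (0:ℝ)..s, haarFn n u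

/-- `⟨S_i(s), e_v⟩` for the `d`-dimensional Schauder functions
`S_n(s) = ∫₀^s g_n(u) du` with `g_{d(r-1)+j} = H_r · e_j`
(components indexed by `v ∈ {1,…,d}`). -/
noncomputable def schauderComp (d i : ℕ) (s : ℝ) (v : ℕ) : ℝ :=
  if (i - 1) % d + 1 = v then schauderFn ((i - 1) / d + 1) s else 0

/-- The index `i_{p,j} = 2^{p-1}(d+j-1) + 1 + ∑_{q=0}^{p-1} c_q 2^{p-q-1}`
determined by dyadic digits `c`. -/
def dyadicIdx (d j : ℕ) (c : ℕ → ℕ) (p : ℕ) : ℕ :=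
  2 ^ (p - 1) * (d + j - 1) + 1 + ∑ q ∈ Finset.range p, c q * 2 ^ (p - q - 1)

/-!
At Haar level `m` the only Schauder function that can be nonzero at `s` is the one whose dyadic
interval contains `s`, and its square is `tent w ^ 2 / 2 ^ m` with `w` the fractional part of
`2 ^ m * s`. This is exactly the drop `D m - D (m + 1)` of `D m = bridgeVariance s m`. The weight
`λ` at level `m` is at most `λ (2 ^ (m + 1) * (d + j))`, which is `λ_{i_{m+1,j}}` for the digits
`0, 1, 1, …`; Abel summation against the monotone weights, with `D m ≤ 2 ^ (-m - 2)`, bounds the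
series by half the dyadic sum `∑ λ_{i_{p,j}} / 2 ^ p`.
-/

open Set Function

def tent (y : ℝ) : ℝ := max 0 (min y (1 - y))

lemma support_tent : support tent = Ioo 0 1 := by
  ext y
  simp only [mem_support, mem_Ioo, tent]
  constructor
  · intro h
    by_contra hy
    rw [not_and_or, not_lt, not_lt] at hy
    refine h (max_eq_left ?_)
    rcases hy with hy | hy
    · exact (min_le_left _ _).trans hy
    · exact (min_le_right _ _).trans (by linarith)
  · rintro ⟨h0, h1⟩
    exact (lt_max_of_lt_right (lt_min h0 (by linarith))).ne'

lemma two_mul_min_half_sub_min_sub_min (y : ℝ) :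
    2 * min y (1 / 2) - min y 0 - min y 1 = tent y := by
  simp only [tent, max_def, min_def]
  split_ifs <;> linarith

lemma tent_sq_eq (w : ℝ) (hw0 : 0 ≤ w) (hw1 : w < 1) :
    tent w ^ 2 = w * (1 - w) - Int.fract (2 * w) * (1 - Int.fract (2 * w)) / 2 := by
  rcases lt_or_ge w (1 / 2) with h | h
  · rw [Int.fract_eq_self.2 ⟨by linarith, by linarith⟩,
      show tent w = w by simp only [tent]; rw [min_eq_left (by linarith), max_eq_right hw0]]
    ring
  · rw [show 2 * w = (2 * w - 1) + 1 by ring, Int.fract_add_one,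
      Int.fract_eq_self.2 ⟨by linarith, by linarith⟩,
      show tent w = 1 - w by
        simp only [tent]; rw [min_eq_right (by linarith), max_eq_right (by linarith)]]
    ring

lemma haarFn_two_pow_add_add_one {m k : ℕ} (hk : k < 2 ^ m) (u : ℝ) :
    haarFn (2 ^ m + k + 1) u = 2 ^ ((m : ℝ) / 2) *
      ((Ico ((k : ℝ) / 2 ^ m) ((k + 1 / 2) / 2 ^ m)).indicator 1 u -
        (Ico (((k : ℝ) + 1 / 2) / 2 ^ m) ((k + 1) / 2 ^ m)).indicator 1 u) := by
  have hlog : Nat.log 2 (2 ^ m + k + 1 - 1) = m :=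
    Nat.log_eq_of_pow_le_of_lt_pow (by omega) (by rw [pow_succ]; omega)
  have hmid : (2 * ((k : ℝ) + 1) - 1) / 2 ^ (m + 1) = (k + 1 / 2) / 2 ^ m := by
    rw [pow_succ]
    field_simp
    ring
  rw [haarFn, if_neg (by have := Nat.two_pow_pos m; omega)]
  simp only [hlog, show 2 ^ m + k + 1 - 2 ^ m = k + 1 by omega]
  push_cast
  simp only [add_sub_cancel_right, hmid]
  by_cases h₁ : u ∈ Ico (k / 2 ^ m : ℝ) ((k + 1 / 2) / 2 ^ m)
  · have h₂ : u ∉ Ico ((k + 1 / 2) / 2 ^ m : ℝ) ((k + 1) / 2 ^ m) := fun h => by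
      linarith [h.1, h₁.2]
    rw [if_pos (mem_Ico.1 h₁), indicator_of_mem h₁, indicator_of_notMem h₂]
    simp
  · rw [if_neg (mt mem_Ico.2 h₁), indicator_of_notMem h₁]
    by_cases h₂ : u ∈ Ico ((k + 1 / 2) / 2 ^ m : ℝ) ((k + 1) / 2 ^ m)
    · rw [if_pos (mem_Ico.1 h₂), indicator_of_mem h₂]
      simp
    · rw [if_neg (mt mem_Ico.2 h₂), indicator_of_notMem h₂]
      simp

lemma integral_indicator_Ico_one {a b s : ℝ} (ha : 0 ≤ a) (hab : a ≤ b) (hs : 0 ≤ s) :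
    ∫ u in (0 : ℝ)..s, (Ico a b).indicator 1 u = min s b - min s a := by
  rw [intervalIntegral.integral_of_le hs, integral_Ioc_eq_integral_Ioo,
    ← integral_Ico_eq_integral_Ioo, setIntegral_indicator measurableSet_Ico, Ico_inter_Ico,
    Pi.one_def, setIntegral_const, Real.volume_real_Ico, smul_eq_mul, mul_one, max_eq_right ha]
  rcases le_total s a with h | h
  · rw [min_eq_left h, min_eq_left (h.trans hab), max_eq_right (by linarith)]
    ring
  · rw [min_eq_right h, max_eq_left (by simpa using ⟨h, hab⟩)]

lemma schauderFn_one (s : ℝ) : schauderFn 1 s = s := by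
  simp [schauderFn, haarFn]

lemma schauderFn_two_pow_add_add_one {m k : ℕ} (hk : k < 2 ^ m) {s : ℝ} (hs : 0 ≤ s) :
    schauderFn (2 ^ m + k + 1) s = tent (2 ^ m * s - k) / 2 ^ ((m : ℝ) / 2) := by
  have h2m : (0 : ℝ) < 2 ^ m := by positivity
  have hint (a b : ℝ) : IntervalIntegrable ((Ico a b).indicator (1 : ℝ → ℝ)) volume 0 s :=
    ⟨intervalIntegrable_const.1.indicator measurableSet_Ico,
      intervalIntegrable_const.2.indicator measurableSet_Ico⟩
  have hmin (a : ℝ) : min s ((k + a) / 2 ^ m) = (min (2 ^ m * s - k) a + k) / 2 ^ m := by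
    rw [← min_add_add_right, sub_add_cancel, ← min_div_div_right h2m.le, add_comm (k : ℝ) a]
    field_simp
  have hsqrt : (2 : ℝ) ^ m = 2 ^ ((m : ℝ) / 2) * 2 ^ ((m : ℝ) / 2) := by
    rw [← Real.rpow_add two_pos, add_halves, Real.rpow_natCast]
  simp only [schauderFn, haarFn_two_pow_add_add_one hk, intervalIntegral.integral_const_mul]
  rw [intervalIntegral.integral_sub (hint _ _) (hint _ _),
    integral_indicator_Ico_one (by positivity) (by gcongr; norm_num) hs,
    integral_indicator_Ico_one (by positivity) (by gcongr; norm_num) hs,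
    ← two_mul_min_half_sub_min_sub_min, show (k : ℝ) / 2 ^ m = (k + 0) / 2 ^ m by simp,
    hmin, hmin, hmin, eq_div_iff (by positivity)]
  field_simp
  rw [hsqrt]
  ring

lemma tent_sub_natCast {x : ℝ} (hx : 0 ≤ x) (k : ℕ) :
    tent (x - k) = if k = ⌊x⌋₊ then tent (Int.fract x) else 0 := by
  split_ifs with h
  · rw [h, Int.fract, ← Int.natCast_floor_eq_floor hx, Int.cast_natCast]
  · by_contra hne
    have hk := (show x - k ∈ support tent from hne)
    rw [support_tent, mem_Ioo] at hk
    exact h ((Nat.floor_eq_iff hx).2 ⟨by linarith, by linarith⟩).symm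

lemma sum_range_tent_sub_sq_le {x : ℝ} (hx : 0 ≤ x) (n : ℕ) :
    ∑ k ∈ Finset.range n, tent (x - k) ^ 2 ≤ tent (Int.fract x) ^ 2 := by
  simp only [tent_sub_natCast hx, ite_pow, ne_eq, OfNat.ofNat_ne_zero, not_false_eq_true,
    zero_pow, Finset.sum_ite_eq']
  split_ifs
  exacts [le_rfl, sq_nonneg _]

/-- The variance at `s` of a Brownian bridge across the level-`m` dyadic interval containing `s`;
the Schauder levels `≥ m` exhaust it. -/
noncomputable def bridgeVariance (s : ℝ) (m : ℕ) : ℝ :=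
  Int.fract (2 ^ m * s) * (1 - Int.fract (2 ^ m * s)) / 2 ^ m

lemma bridgeVariance_nonneg (s : ℝ) (m : ℕ) : 0 ≤ bridgeVariance s m :=
  div_nonneg (mul_nonneg (Int.fract_nonneg _) (by linarith [Int.fract_lt_one (2 ^ m * s)]))
    (by positivity)

lemma bridgeVariance_le (s : ℝ) (m : ℕ) : bridgeVariance s m ≤ 1 / 2 ^ (m + 2) := by
  rw [bridgeVariance, pow_add, div_le_div_iff₀ (by positivity) (by positivity)]
  nlinarith [sq_nonneg (2 * Int.fract (2 ^ m * s) - 1), pow_pos (two_pos (α := ℝ)) m]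

lemma fract_two_pow_succ_mul (s : ℝ) (m : ℕ) :
    Int.fract (2 ^ (m + 1) * s) = Int.fract (2 * Int.fract (2 ^ m * s)) := by
  rw [← Int.fract_add_intCast (2 * Int.fract (2 ^ m * s)) (2 * ⌊2 ^ m * s⌋)]
  congr 1
  rw [Int.fract, pow_succ]
  push_cast
  ring

lemma bridgeVariance_sub_succ (s : ℝ) (m : ℕ) :
    bridgeVariance s m - bridgeVariance s (m + 1) =
      tent (Int.fract (2 ^ m * s)) ^ 2 / 2 ^ m := by
  rw [tent_sq_eq _ (Int.fract_nonneg _) (Int.fract_lt_one _), bridgeVariance, bridgeVariance,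
    fract_two_pow_succ_mul, pow_succ]
  ring

section Abel

variable {γ D : ℕ → ℝ}

lemma sum_mul_sub_succ_add_le (hγ : Monotone γ) (hγ0 : 0 ≤ γ 0)
    (hD : ∀ m, D m ≤ 1 / 2 ^ (m + 2)) (N : ℕ) :
    ∑ m ∈ Finset.range N, γ (m + 1) * (D m - D (m + 1)) + γ N * D N ≤
      (∑ p ∈ Finset.range N, γ p / 2 ^ (p + 1) + γ N / 2 ^ N) / 2 := by
  induction N with
  | zero =>
    have := hD 0
    norm_num at this ⊢
    nlinarith
  | succ N ih =>
    have hstep : (γ (N + 1) - γ N) * D N ≤ (γ (N + 1) - γ N) * (1 / 2 ^ (N + 2)) :=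
      mul_le_mul_of_nonneg_left (hD N) (sub_nonneg.2 (hγ N.le_succ))
    have hrhs :
        (∑ p ∈ Finset.range (N + 1), γ p / 2 ^ (p + 1) + γ (N + 1) / 2 ^ (N + 1)) / 2 =
        (∑ p ∈ Finset.range N, γ p / 2 ^ (p + 1) + γ N / 2 ^ N) / 2 +
          (γ (N + 1) - γ N) * (1 / 2 ^ (N + 2)) := by
      rw [Finset.sum_range_succ, pow_succ, pow_succ, pow_succ]
      ring
    rw [hrhs, Finset.sum_range_succ]
    linarith

lemma sum_range_add_le_tsum (hγ : Monotone γ) (hsum : Summable fun p => γ p / 2 ^ (p + 1))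
    (N : ℕ) :
    ∑ p ∈ Finset.range N, γ p / 2 ^ (p + 1) + γ N / 2 ^ N ≤ ∑' p, γ p / 2 ^ (p + 1) := by
  rw [← hsum.sum_add_tsum_nat_add N]
  gcongr
  have hgeom : HasSum (fun i : ℕ => γ N / 2 ^ (N + 1) * (1 / 2) ^ i) (γ N / 2 ^ N) := by
    have := hasSum_geometric_two.mul_left (γ N / 2 ^ (N + 1))
    rwa [show γ N / 2 ^ (N + 1) * 2 = γ N / 2 ^ N by rw [pow_succ]; field_simp] at this
  refine hasSum_le ?_ hgeom ((summable_nat_add_iff N).2 hsum).hasSum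
  intro i
  rw [one_div_pow, mul_one_div, div_div, ← pow_add, show N + 1 + i = i + N + 1 by ring]
  gcongr
  exact hγ (by omega)

lemma sum_mul_sub_succ_le_half_tsum (hγ : Monotone γ) (hγ0 : 0 ≤ γ 0) (hD0 : ∀ m, 0 ≤ D m)
    (hD : ∀ m, D m ≤ 1 / 2 ^ (m + 2)) (hsum : Summable fun p => γ p / 2 ^ (p + 1)) (N : ℕ) :
    ∑ m ∈ Finset.range N, γ (m + 1) * (D m - D (m + 1)) ≤
      (∑' p, γ p / 2 ^ (p + 1)) / 2 := by
  have htail := sum_range_add_le_tsum hγ hsum N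
  have hlast : 0 ≤ γ N * D N := mul_nonneg (hγ0.trans (hγ N.zero_le)) (hD0 N)
  linarith [sum_mul_sub_succ_add_le hγ hγ0 hD N]

end Abel

lemma sum_range_two_pow {M : Type*} [AddCommMonoid M] (g : ℕ → M) (N : ℕ) :
    ∑ r ∈ Finset.range (2 ^ N), g r =
      g 0 + ∑ m ∈ Finset.range N, ∑ k ∈ Finset.range (2 ^ m), g (2 ^ m + k) := by
  induction N with
  | zero => simp
  | succ N ih => rw [pow_succ, mul_two, Finset.sum_range_add, ih, Finset.sum_range_succ, add_assoc]

lemma sum_level_mul_schauderFn_sq_le {l : ℕ → ℝ} (hl0 : ∀ n, 0 ≤ l n) (hl : Monotone l)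
    (d j m : ℕ) {s : ℝ} (hs : 0 ≤ s) :
    ∑ k ∈ Finset.range (2 ^ m), l (d * (2 ^ m + k) + j) * schauderFn (2 ^ m + k + 1) s ^ 2 ≤
      l (2 ^ (m + 1) * (d + j)) * (bridgeVariance s m - bridgeVariance s (m + 1)) := by
  have hsq (k : ℕ) (hk : k < 2 ^ m) :
      schauderFn (2 ^ m + k + 1) s ^ 2 = tent (2 ^ m * s - k) ^ 2 / 2 ^ m := by
    rw [schauderFn_two_pow_add_add_one hk hs, div_pow, ← Real.rpow_natCast (2 ^ _),
      ← Real.rpow_mul two_pos.le]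
    norm_num
  calc ∑ k ∈ Finset.range (2 ^ m), l (d * (2 ^ m + k) + j) * schauderFn (2 ^ m + k + 1) s ^ 2
      ≤ ∑ k ∈ Finset.range (2 ^ m),
          l (2 ^ (m + 1) * (d + j)) * (tent (2 ^ m * s - k) ^ 2 / 2 ^ m) := by
        refine Finset.sum_le_sum fun k hk => ?_
        rw [Finset.mem_range] at hk
        rw [hsq k hk]
        refine mul_le_mul_of_nonneg_right (hl ?_) (by positivity)
        rw [pow_succ]
        nlinarith
    _ = l (2 ^ (m + 1) * (d + j)) *
          ((∑ k ∈ Finset.range (2 ^ m), tent (2 ^ m * s - k) ^ 2) / 2 ^ m) := by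
        rw [Finset.sum_div, Finset.mul_sum]
    _ ≤ l (2 ^ (m + 1) * (d + j)) * (tent (Int.fract (2 ^ m * s)) ^ 2 / 2 ^ m) := by
        gcongr
        · exact hl0 _
        · exact sum_range_tent_sub_sq_le (by positivity) _
    _ = l (2 ^ (m + 1) * (d + j)) * (bridgeVariance s m - bridgeVariance s (m + 1)) := by
        rw [bridgeVariance_sub_succ]

lemma sum_range_mul_schauderFn_sq_le {l : ℕ → ℝ} (hl0 : ∀ n, 0 ≤ l n) (hl : Monotone l)
    (d j : ℕ) {s : ℝ} (hs : 0 ≤ s)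
    (hsum : Summable fun p => l (2 ^ p * (d + j)) / 2 ^ (p + 1)) (N : ℕ) :
    ∑ r ∈ Finset.range N, l (d * r + j) * schauderFn (r + 1) s ^ 2 ≤
      l j * s ^ 2 + (∑' p, l (2 ^ p * (d + j)) / 2 ^ (p + 1)) / 2 := by
  have hγ : Monotone fun p => l (2 ^ p * (d + j)) := fun p q hpq =>
    hl (Nat.mul_le_mul_right _ (Nat.pow_le_pow_right two_pos hpq))
  calc ∑ r ∈ Finset.range N, l (d * r + j) * schauderFn (r + 1) s ^ 2
      ≤ ∑ r ∈ Finset.range (2 ^ N), l (d * r + j) * schauderFn (r + 1) s ^ 2 :=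
        Finset.sum_le_sum_of_subset_of_nonneg (Finset.range_mono Nat.lt_two_pow_self.le)
          fun r _ _ => mul_nonneg (hl0 _) (sq_nonneg _)
    _ = l j * s ^ 2 + ∑ m ∈ Finset.range N, ∑ k ∈ Finset.range (2 ^ m),
          l (d * (2 ^ m + k) + j) * schauderFn (2 ^ m + k + 1) s ^ 2 := by
        rw [sum_range_two_pow, mul_zero, zero_add, zero_add, schauderFn_one]
    _ ≤ l j * s ^ 2 + ∑ m ∈ Finset.range N,
          l (2 ^ (m + 1) * (d + j)) * (bridgeVariance s m - bridgeVariance s (m + 1)) := by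
        gcongr with m
        exact sum_level_mul_schauderFn_sq_le hl0 hl d j m hs
    _ ≤ l j * s ^ 2 + (∑' p, l (2 ^ p * (d + j)) / 2 ^ (p + 1)) / 2 := by
        gcongr
        exact sum_mul_sub_succ_le_half_tsum hγ (hl0 _) (bridgeVariance_nonneg s)
          (bridgeVariance_le s) hsum N

lemma schauderComp_mul_add {d j : ℕ} (hj : 1 ≤ j) (hjd : j ≤ d) (r : ℕ) (s : ℝ) :
    schauderComp d (d * r + j) s j = schauderFn (r + 1) s := by
  have hidx : d * r + j - 1 = j - 1 + d * r := by omega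
  rw [schauderComp, hidx, Nat.add_mul_mod_self_left, Nat.mod_eq_of_lt (by omega),
    Nat.add_mul_div_left _ _ (by omega), Nat.div_eq_of_lt (by omega), zero_add,
    if_pos (by omega)]

lemma support_schauderComp_subset (d j : ℕ) (s : ℝ) :
    support (fun i => schauderComp d (i + 1) s j) ⊆ range fun r => d * r + (j - 1) := by
  intro i hi
  simp only [mem_support, schauderComp, Nat.add_sub_cancel, ne_eq, ite_eq_right_iff,
    not_forall] at hi
  obtain ⟨hij, -⟩ := hi
  exact ⟨i / d, show d * (i / d) + (j - 1) = i by have := Nat.div_add_mod i d; omega⟩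

lemma summable_and_tsum_le_of_support_subset_range {f : ℕ → ℝ} {θ : ℕ → ℕ}
    (hf : ∀ i, 0 ≤ f i) (hθ : Injective θ) (hsupp : support f ⊆ range θ) {B : ℝ}
    (hB : ∀ N, ∑ r ∈ Finset.range N, f (θ r) ≤ B) : Summable f ∧ ∑' i, f i ≤ B := by
  refine ⟨(hθ.summable_iff fun i hi => notMem_support.1 fun h => hi (hsupp h)).1
    (summable_of_sum_range_le (fun r => hf _) hB), ?_⟩
  rw [← hθ.tsum_eq hsupp]
  exact Real.tsum_le_of_sum_range_le (fun r => hf _) hB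

lemma dyadicIdx_min_one {d j : ℕ} (hdj : 1 ≤ d + j) (p : ℕ) :
    dyadicIdx d j (fun q => min q 1) (p + 1) = 2 ^ p * (d + j) := by
  have hdigits (p : ℕ) :
      ∑ q ∈ Finset.range (p + 1), min q 1 * 2 ^ (p + 1 - q - 1) + 1 = 2 ^ p := by
    induction p with
    | zero => simp
    | succ p ih =>
      have hshift : ∑ q ∈ Finset.range (p + 1), min q 1 * 2 ^ (p + 1 + 1 - q - 1) =
          2 * ∑ q ∈ Finset.range (p + 1), min q 1 * 2 ^ (p + 1 - q - 1) := by
        rw [Finset.mul_sum]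
        refine Finset.sum_congr rfl fun q hq => ?_
        rw [Finset.mem_range] at hq
        rw [show p + 1 + 1 - q - 1 = (p + 1 - q - 1) + 1 by omega, pow_succ]
        ring
      rw [Finset.sum_range_succ, hshift, pow_succ, min_eq_right (by omega),
        show p + 1 + 1 - (p + 1) - 1 = 0 by omega]
      omega
  have hp := hdigits p
  rw [dyadicIdx, Nat.add_sub_cancel]
  have h2 : 2 ^ p * (d + j) = 2 ^ p * (d + j - 1) + 2 ^ p := by
    rw [← Nat.mul_succ]; congr 1; omega
  omega

/-- If `∑_p λ_{i_{p,j}}/2^p` is bounded by `M j` over all dyadic digit sequences,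
then for every `s ∈ [0,1]` and `j ∈ {1,…,d}` the series
`∑_i λ_i ⟨S_i(s), e_j⟩²` converges and is bounded by
`λ_j s² + (1/2)·M j`, uniformly in `s`. -/
theorem sum_lambda_schauder_sq_bounded (d : ℕ) (hd : 1 ≤ d)
    (l : ℕ → ℝ) (hpos : ∀ n, 0 < l n) (hmono : Monotone l) (M : ℕ → ℝ)
    (hM : ∀ j, 1 ≤ j → j ≤ d → ∀ c : ℕ → ℕ, (∀ q, c q ≤ 1) → c 0 = 0 →
      Summable (fun p : ℕ => l (dyadicIdx d j c (p + 1)) / 2 ^ (p + 1)) ∧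
      (∑' p : ℕ, l (dyadicIdx d j c (p + 1)) / 2 ^ (p + 1)) ≤ M j) :
    ∀ s ∈ Set.Icc (0:ℝ) 1, ∀ j, 1 ≤ j → j ≤ d →
      Summable (fun i : ℕ => l (i + 1) * (schauderComp d (i + 1) s j) ^ 2) ∧
      (∑' i : ℕ, l (i + 1) * (schauderComp d (i + 1) s j) ^ 2) ≤
        l j * s ^ 2 + (1 / 2) * M j := by
  rintro s ⟨hs, -⟩ j hj hjd
  have hl0 n : 0 ≤ l n := (hpos n).le
  -- The digits `0, 1, 1, …` give the largest index `i_{p,j}` at every level.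
  obtain ⟨hsum, hle⟩ := hM j hj hjd (fun q => min q 1) (fun q => min_le_right q 1) rfl
  simp only [dyadicIdx_min_one (show 1 ≤ d + j by omega)] at hsum hle
  refine summable_and_tsum_le_of_support_subset_range (fun i => mul_nonneg (hl0 _) (sq_nonneg _))
    (θ := fun r => d * r + (j - 1))
    (fun a b h => Nat.eq_of_mul_eq_mul_left hd (Nat.add_right_cancel h))
    (fun i hi => support_schauderComp_subset d j s fun h => hi (by simp [h])) fun N => ?_
  have hidx r : d * r + (j - 1) + 1 = d * r + j := by omega
  simp only [hidx, schauderComp_mul_add hj hjd]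
  linarith [sum_range_mul_schauderFn_sq_le hl0 hmono d j hs hsum N]
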